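/- (Eigenvalue bound for anchored games) Let $G$ be a $k$-player game and let $G_\bot$ be its $\alpha$-anchored version with $0 < \alpha < 1/2$. Then the second-smallest Laplacian eigenvalue of the $(k-1)$-connection graph $H$ of $G_\bot$ satisfies $\lambda(H) \ge \alpha^k/(8k)$. -/

import Mathlib

open Finset

noncomputable section

/-- Marginal probability of `X^{-t} = x^{-t}` under `μ`. -/
def margMinus {k : ℕ} {X : Fin k → Type*} [∀ t, Fintype (X t)] [∀ t, DecidableEq (X t)]
    (μ : (∀ t, X t) → ℝ) (t : Fin k) (x : ∀ t, X t) : ℝ :=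
  ∑ a : X t, μ (Function.update x t a)

/-- Conditional probability of `X^t = a` given `X^{-t} = x^{-t}` (zero if the marginal
vanishes). -/
def condProb {k : ℕ} {X : Fin k → Type*} [∀ t, Fintype (X t)] [∀ t, DecidableEq (X t)]
    (μ : (∀ t, X t) → ℝ) (t : Fin k) (x : ∀ t, X t) (a : X t) : ℝ :=
  if 0 < margMinus μ t x then μ (Function.update x t a) / margMinus μ t x else 0

open Classical in
/-- The weight function of the `(k-1)`-connection graph. -/
def connRho {k : ℕ} {X : Fin k → Type*} [∀ t, Fintype (X t)] [∀ t, DecidableEq (X t)]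
    (μ : (∀ t, X t) → ℝ) (x x' : ∀ t, X t) : ℝ :=
  if x = x' then
    (k : ℝ)⁻¹ * μ x * ∑ t, condProb μ t x (x t)
  else
    (k : ℝ)⁻¹ * ∑ t, (if ∀ s, s ≠ t → x s = x' s then
      margMinus μ t x * condProb μ t x (x t) * condProb μ t x (x' t) else 0)


noncomputable section

variable {V : Type*} [Fintype V]

/-- Vertex weight `ρ(u) = ∑_v ρ(u,v)`. -/
def vertexWeight (ρ : V → V → ℝ) (u : V) : ℝ := ∑ v, ρ u v

/-- The weighted average `ḡ = ∑_u ρ(u) g(u)` of an embedding. -/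
def gbar (ρ : V → V → ℝ) {r : ℕ} (g : V → EuclideanSpace ℝ (Fin r)) :
    EuclideanSpace ℝ (Fin r) :=
  ∑ u, vertexWeight ρ u • g u

/-- The Dirichlet energy `∑_{u,v} ρ(u,v) ‖g(u) - g(v)‖²`. -/
def dirichletEnergy (ρ : V → V → ℝ) {r : ℕ} (g : V → EuclideanSpace ℝ (Fin r)) : ℝ :=
  ∑ u, ∑ v, ρ u v * ‖g u - g v‖ ^ 2

/-- The variance `∑_u ρ(u) ‖g(u) - ḡ‖²`. -/
def varianceH (ρ : V → V → ℝ) {r : ℕ} (g : V → EuclideanSpace ℝ (Fin r)) : ℝ :=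
  ∑ u, vertexWeight ρ u * ‖g u - gbar ρ g‖ ^ 2

/-- The variational formula for the second-smallest eigenvalue of the normalized Laplacian:
`λ(H) = inf_g (Dirichlet energy of g) / (variance of g)` over nonconstant vector-valued
embeddings `g` of the vertices (in any dimension). -/
def lamH (ρ : V → V → ℝ) : ℝ :=
  sInf { q : ℝ | ∃ r : ℕ, ∃ g : V → EuclideanSpace ℝ (Fin r),
    varianceH ρ g ≠ 0 ∧ q = dirichletEnergy ρ g / varianceH ρ g }

/-- The question distribution of the `α`-anchored game `G_⊥`: sample `x ∼ μ` and
independently replace each coordinate by the anchor `⊥` (modeled by `none`) with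
probability `α`. -/
def anchoredDist {k : ℕ} {X : Fin k → Type*} [∀ t, Fintype (X t)] [∀ t, DecidableEq (X t)]
    (μ : (∀ t, X t) → ℝ) (α : ℝ) (w : ∀ t, Option (X t)) : ℝ :=
  ∑ x : ∀ t, X t, μ x * ∏ t,
    (match w t with
      | none => α
      | some a => if a = x t then 1 - α else 0)

/-!
The vertex weights of the connection graph `H` are the anchored probabilities `ν`, so the
variance of an embedding `g` is at most `∑_w ν(w) ‖g w - g ⊥‖²`, where `⊥` is the all-anchor
vertex. Walk from `w = P₀ w` to `P_k w = ⊥`, where `P_i` anchors the first `i` coordinates, and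
apply Cauchy–Schwarz with weights `α^{-(i+1)}`. Since anchoring a coordinate keeps an
`α`-fraction of the probability mass, `α^i ∑_w ν(w) F(P_i w) ≤ ∑_u ν(u) F(u)` for `F ≥ 0`, and
the edge `u → u[i ↦ ⊥]` of `H` has weight `α ν(u) / k`. Hence
`Var ≤ k (∑_{i<k} α^{-(i+1)}) E ≤ (2k / α^k) E` when `α ≤ 1/2`.
-/

section UpdateSums

variable {ι : Type*} [Fintype ι] [DecidableEq ι] {β : ι → Type*} [∀ i, Fintype (β i)]
  [∀ i, DecidableEq (β i)]

lemma sum_ite_forall_ne_eq {M : Type*} [AddCommMonoid M] (x : ∀ i, β i) (t : ι)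
    [DecidablePred fun v : ∀ i, β i => ∀ s, s ≠ t → x s = v s] (h : β t → M) :
    ∑ v : ∀ i, β i, (if ∀ s, s ≠ t → x s = v s then h (v t) else 0) = ∑ a, h a := by
  have hfilter : univ.filter (fun v : ∀ i, β i => ∀ s, s ≠ t → x s = v s) =
      univ.image (Function.update x t) := by
    ext v
    simp only [mem_filter, mem_univ, true_and, mem_image]
    constructor
    · intro hv
      refine ⟨v t, funext fun s => ?_⟩
      rcases eq_or_ne s t with rfl | hs
      · exact Function.update_self ..
      · rw [Function.update_of_ne hs, hv s hs]
    · rintro ⟨a, rfl⟩ s hs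
      rw [Function.update_of_ne hs]
  rw [← sum_filter, hfilter, sum_image fun a _ b _ hab => Function.update_injective x t hab]
  simp only [Function.update_self]

lemma sum_mul_comp_update {R : Type*} [CommSemiring R] (f G : (∀ i, β i) → R) (t : ι)
    (a : β t) :
    ∑ w, f w * G (Function.update w t a) =
      ∑ w, if w t = a then (∑ c, f (Function.update w t c)) * G w else 0 := by
  let e := Equiv.piSplitAt t β
  have hupdate : ∀ c c' r, Function.update (e.symm (c, r)) t c' = e.symm (c', r) := by
    intro c c' r
    funext s
    rcases eq_or_ne s t with rfl | hs
    · simp [e]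
    · simp [e, hs]
  have happly : ∀ c r, e.symm (c, r) t = c := by simp [e]
  rw [← e.symm.sum_comp, ← e.symm.sum_comp, Fintype.sum_prod_type, Fintype.sum_prod_type,
    sum_comm, sum_comm (γ := β t)]
  refine sum_congr rfl fun r _ => ?_
  simp only [hupdate, happly, sum_ite_eq', mem_univ, if_true, sum_mul]

lemma sum_comp_update_le_sum {f : (∀ i, β i) → ℝ} (hf : ∀ v, 0 ≤ f v) (u a : ∀ i, β i)
    (hu : f u = 0) :
    ∑ i, f (Function.update u i (a i)) ≤ ∑ v, f v := by
  have hsupp : ∀ i ∈ univ, f (Function.update u i (a i)) ≠ 0 → u i ≠ a i := by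
    rintro i - hi hia
    exact hi (by rw [← hia, Function.update_eq_self, hu])
  have hinj : Set.InjOn (fun i => Function.update u i (a i)) (univ.filter fun i => u i ≠ a i) := by
    intro i hi j _ hij
    by_contra hne
    have := congrFun hij i
    simp only [Function.update_self, Function.update_of_ne hne] at this
    exact (mem_filter.1 hi).2 this.symm
  rw [← sum_filter_of_ne hsupp, ← sum_image hinj]
  exact sum_le_univ_sum_of_nonneg hf

lemma sum_sum_update_le_dirichletEnergy {ρ : (∀ i, β i) → (∀ i, β i) → ℝ} (hρ : ∀ u v, 0 ≤ ρ u v) (a : ∀ i, β i) {r : ℕ}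
    (g : (∀ i, β i) → EuclideanSpace ℝ (Fin r)) :
    ∑ i, ∑ u, ρ u (Function.update u i (a i)) * ‖g u - g (Function.update u i (a i))‖ ^ 2 ≤
      dirichletEnergy ρ g := by
  rw [dirichletEnergy, sum_comm]
  refine sum_le_sum fun u _ => sum_comp_update_le_sum (f := fun v => ρ u v * ‖g u - g v‖ ^ 2)
    (fun v => mul_nonneg (hρ u v) (sq_nonneg _)) u a ?_
  simp

end UpdateSums

section Variance

open RealInnerProductSpace

variable {ι : Type*} {E : Type*} [NormedAddCommGroup E] [InnerProductSpace ℝ E]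

lemma sum_mul_norm_sub_sum_smul_sq_le [Fintype ι] {d : ι → ℝ} (hd : ∑ i, d i = 1) (g : ι → E)
    (p : E) : ∑ i, d i * ‖g i - ∑ j, d j • g j‖ ^ 2 ≤ ∑ i, d i * ‖g i - p‖ ^ 2 := by
  set m := ∑ j, d j • g j
  have hcentre : ∑ i, d i • (g i - m) = 0 := by
    simp only [smul_sub, sum_sub_distrib, ← sum_smul, hd, one_smul, m, sub_self]
  have hsplit : ∀ i, d i * ‖g i - p‖ ^ 2 =
      d i * ‖g i - m‖ ^ 2 + 2 * ⟪d i • (g i - m), m - p⟫ + d i * ‖m - p‖ ^ 2 := by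
    intro i
    rw [← sub_add_sub_cancel (g i) m p, norm_add_sq_real, real_inner_smul_left]
    ring
  simp only [hsplit, sum_add_distrib, ← mul_sum, ← sum_inner, hcentre, inner_zero_left,
    ← sum_mul, hd]
  nlinarith [sq_nonneg ‖m - p‖]

end Variance

lemma norm_sum_sq_le_sum_mul_sum_sq_div {ι E : Type*} [SeminormedAddCommGroup E] (s : Finset ι)
    (v : ι → E) {c : ι → ℝ}
    (hc : ∀ i ∈ s, 0 < c i) :
    ‖∑ i ∈ s, v i‖ ^ 2 ≤ (∑ i ∈ s, c i) * ∑ i ∈ s, ‖v i‖ ^ 2 / c i := by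
  refine (pow_le_pow_left₀ (norm_nonneg _) (norm_sum_le s v) 2).trans ?_
  refine sum_sq_le_sum_mul_sum_of_sq_le_mul s (fun i hi => (hc i hi).le)
    (fun i hi => div_nonneg (sq_nonneg _) (hc i hi).le) fun i hi => ?_
  rw [mul_div_cancel₀ _ (hc i hi).ne']

lemma sum_range_inv_pow_succ_le {α : ℝ} (hα0 : 0 < α) (hα : α ≤ 1 / 2) (k : ℕ) :
    ∑ i ∈ range k, (α ^ (i + 1))⁻¹ ≤ 2 / α ^ k := by
  induction k with
  | zero => norm_num
  | succ k ih =>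
    rw [sum_range_succ]
    calc ∑ i ∈ range k, (α ^ (i + 1))⁻¹ + (α ^ (k + 1))⁻¹
        ≤ 2 / α ^ k + (α ^ (k + 1))⁻¹ := by gcongr
      _ = (2 * α + 1) / α ^ (k + 1) := by field_simp; ring
      _ ≤ 2 / α ^ (k + 1) := by gcongr; linarith

lemma exists_ne_pos_of_apply_lt_sum {f : V → ℝ} {b : V} (hb : f b < ∑ v, f v) :
    ∃ v, v ≠ b ∧ 0 < f v := by
  classical
  by_contra! hall
  rw [← add_sum_erase _ _ (mem_univ b)] at hb
  linarith [sum_nonpos (s := univ.erase b) fun v hv => hall v (ne_of_mem_erase hv)]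

section Spectral

variable {ρ : V → V → ℝ}

lemma exists_varianceH_ne_zero (hw : ∀ u, 0 ≤ vertexWeight ρ u) {u v : V} (huv : u ≠ v)
    (hu : 0 < vertexWeight ρ u) (hv : 0 < vertexWeight ρ v) :
    ∃ r, ∃ g : V → EuclideanSpace ℝ (Fin r), varianceH ρ g ≠ 0 := by
  classical
  set g : V → EuclideanSpace ℝ (Fin 1) := fun w => if w = u then EuclideanSpace.single 0 1 else 0
  refine ⟨1, g, fun hvar => ?_⟩
  have hterm := (sum_eq_zero_iff_of_nonneg fun w _ => mul_nonneg (hw w) (sq_nonneg _)).1 hvar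
  have hmean : ∀ w, 0 < vertexWeight ρ w → g w = gbar ρ g := fun w hw' => by
    simpa [hw'.ne', sub_eq_zero] using hterm w (mem_univ w)
  have := (hmean u hu).trans (hmean v hv).symm
  simp [g, huv.symm] at this

lemma le_lamH (hw : ∀ u, 0 ≤ vertexWeight ρ u)
    (hne : ∃ r, ∃ g : V → EuclideanSpace ℝ (Fin r), varianceH ρ g ≠ 0) {c : ℝ}
    (hc : ∀ r (g : V → EuclideanSpace ℝ (Fin r)), c * varianceH ρ g ≤ dirichletEnergy ρ g) :
    c ≤ lamH ρ := by
  obtain ⟨r, g, hg⟩ := hne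
  refine le_csInf ⟨_, r, g, hg, rfl⟩ ?_
  rintro q ⟨r, g, hg, rfl⟩
  have hpos : 0 < varianceH ρ g :=
    (sum_nonneg fun u _ => mul_nonneg (hw u) (sq_nonneg _)).lt_of_ne' hg
  rw [le_div_iff₀ hpos]
  exact hc r g

end Spectral

section ConnectionGraph

variable {k : ℕ} {X : Fin k → Type*} [∀ t, Fintype (X t)] [∀ t, DecidableEq (X t)]
  {μ : (∀ t, X t) → ℝ}

lemma margMinus_mul_condProb (hμ : ∀ x, 0 ≤ μ x) (t : Fin k) (x : ∀ t, X t) (a : X t) :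
    margMinus μ t x * condProb μ t x a = μ (Function.update x t a) := by
  have hle : μ (Function.update x t a) ≤ margMinus μ t x :=
    single_le_sum (f := fun a => μ (Function.update x t a)) (fun _ _ => hμ _) (mem_univ a)
  unfold condProb
  split_ifs with hpos
  · field_simp
  · linarith [hμ (Function.update x t a)]

lemma apply_eq_zero_of_not_margMinus_pos (hμ : ∀ x, 0 ≤ μ x) {t : Fin k} {x : ∀ t, X t}
    (h : ¬ 0 < margMinus μ t x) : μ x = 0 := by
  have hx := margMinus_mul_condProb hμ t x (x t)
  rwa [Function.update_eq_self, condProb, if_neg h, mul_zero, eq_comm] at hx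

lemma condProb_nonneg (hμ : ∀ x, 0 ≤ μ x) (t : Fin k) (x : ∀ t, X t) (a : X t) :
    0 ≤ condProb μ t x a := by
  unfold condProb
  split_ifs with hpos
  · exact div_nonneg (hμ _) hpos.le
  · exact le_rfl

lemma mul_sum_condProb (hμ : ∀ x, 0 ≤ μ x) (t : Fin k) (x : ∀ t, X t) :
    μ x * ∑ a, condProb μ t x a = μ x := by
  by_cases hpos : 0 < margMinus μ t x
  · have hsum : ∑ a, condProb μ t x a = margMinus μ t x / margMinus μ t x := by
      simp only [condProb, if_pos hpos, ← sum_div]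
      rfl
    rw [hsum, div_self hpos.ne', mul_one]
  · rw [apply_eq_zero_of_not_margMinus_pos hμ hpos, zero_mul]

/-- The diagonal entry of `connRho` is the off-diagonal formula at `x' = x`. -/
lemma connRho_eq_sum (hμ : ∀ x, 0 ≤ μ x) (x x' : ∀ t, X t) :
    connRho μ x x' = (k : ℝ)⁻¹ * ∑ t,
      if ∀ s, s ≠ t → x s = x' s then μ x * condProb μ t x (x' t) else 0 := by
  unfold connRho
  split_ifs with hxx'
  · subst hxx'
    simp only [implies_true, if_true, mul_assoc, mul_sum]
  · congr 1
    refine sum_congr rfl fun t _ => ?_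
    split_ifs
    · rw [margMinus_mul_condProb hμ, Function.update_eq_self]
    · rfl

lemma connRho_nonneg (hμ : ∀ x, 0 ≤ μ x) (x x' : ∀ t, X t) : 0 ≤ connRho μ x x' := by
  rw [connRho_eq_sum hμ]
  refine mul_nonneg (by positivity) (sum_nonneg fun t _ => ?_)
  split_ifs
  · exact mul_nonneg (hμ x) (condProb_nonneg hμ t x _)
  · exact le_rfl

lemma vertexWeight_connRho (hk : 0 < k) (hμ : ∀ x, 0 ≤ μ x) (x : ∀ t, X t) :
    vertexWeight (connRho μ) x = μ x := by
  simp only [vertexWeight, connRho_eq_sum hμ, ← mul_sum]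
  rw [sum_comm, sum_congr rfl fun t _ => sum_ite_forall_ne_eq x t
    (fun a => μ x * condProb μ t x a)]
  simp only [← mul_sum, mul_sum_condProb hμ, sum_const, card_univ, Fintype.card_fin,
    nsmul_eq_mul]
  field_simp

lemma connRho_update_of_ne (hμ : ∀ x, 0 ≤ μ x) {x : ∀ t, X t} {t : Fin k} {a : X t}
    (ha : a ≠ x t) :
    connRho μ x (Function.update x t a) = (k : ℝ)⁻¹ * (μ x * condProb μ t x a) := by
  rw [connRho_eq_sum hμ, sum_eq_single t]
  · rw [if_pos fun s hs => (Function.update_of_ne hs a x).symm, Function.update_self]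
  · intro t' _ ht'
    rw [if_neg fun h => ha ?_]
    simpa using (h t ht'.symm).symm
  · simp

end ConnectionGraph

/-- The probability that the anchoring step turns the coordinate `b` into `c`. -/
def anchorWeight {β : Type*} [DecidableEq β] (α : ℝ) (c : Option β) (b : β) : ℝ :=
  match c with
  | none => α
  | some a => if a = b then 1 - α else 0

section AnchoredDist

variable {k : ℕ} {X : Fin k → Type*} [∀ t, Fintype (X t)] [∀ t, DecidableEq (X t)]
  {μ : (∀ t, X t) → ℝ} {α : ℝ}

lemma anchoredDist_eq (μ : (∀ t, X t) → ℝ) (α : ℝ) (w : ∀ t, Option (X t)) :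
    anchoredDist μ α w = ∑ x, μ x * ∏ t, anchorWeight α (w t) (x t) := by
  refine sum_congr rfl fun x _ => congrArg (μ x * ·) (prod_congr rfl fun t _ => ?_)
  cases w t <;> rfl

omit [∀ t, Fintype (X t)] in
lemma anchorWeight_nonneg (hα0 : 0 ≤ α) (hα1 : α ≤ 1) {β : Type*} [DecidableEq β]
    (c : Option β) (b : β) : 0 ≤ anchorWeight α c b := by
  cases c with
  | none => exact hα0
  | some a =>
    simp only [anchorWeight]
    split_ifs <;> linarith

lemma sum_anchorWeight {β : Type*} [Fintype β] [DecidableEq β] (α : ℝ) (b : β) :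
    ∑ c : Option β, anchorWeight α c b = 1 := by
  simp [Fintype.sum_option, anchorWeight]

lemma anchoredDist_nonneg (hμ : ∀ x, 0 ≤ μ x) (hα0 : 0 ≤ α) (hα1 : α ≤ 1)
    (w : ∀ t, Option (X t)) : 0 ≤ anchoredDist μ α w :=
  (anchoredDist_eq μ α w).symm ▸ sum_nonneg fun x _ => mul_nonneg (hμ x)
    (prod_nonneg fun t _ => anchorWeight_nonneg hα0 hα1 (w t) (x t))

lemma sum_anchoredDist (hμ : ∑ x, μ x = 1) : ∑ w, anchoredDist μ α w = 1 := by
  simp only [anchoredDist_eq, sum_comm (γ := ∀ t, Option (X t)), ← mul_sum]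
  have hprod : ∀ x : ∀ t, X t, ∑ w : ∀ t, Option (X t), ∏ t, anchorWeight α (w t) (x t) = 1 := by
    intro x
    rw [← Fintype.piFinset_univ, ← prod_univ_sum (fun t => univ)
      (fun t c => anchorWeight α c (x t))]
    exact prod_eq_one fun t _ => sum_anchorWeight α (x t)
  simp [hprod, hμ]

lemma anchoredDist_none (hμ : ∑ x, μ x = 1) : anchoredDist μ α (fun _ => none) = α ^ k := by
  simp [anchoredDist_eq, anchorWeight, ← sum_mul, hμ]

lemma anchoredDist_update (w : ∀ t, Option (X t)) (t : Fin k) (c : Option (X t)) :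
    anchoredDist μ α (Function.update w t c) =
      ∑ x, μ x * (anchorWeight α c (x t) * ∏ s ∈ univ.erase t, anchorWeight α (w s) (x s)) := by
  rw [anchoredDist_eq]
  refine sum_congr rfl fun x _ => ?_
  rw [← mul_prod_erase univ _ (mem_univ t), Function.update_self]
  congr 2
  exact prod_congr rfl fun s hs => by rw [Function.update_of_ne (ne_of_mem_erase hs)]

/-- Anchoring coordinate `t` is independent of the other coordinates. -/
lemma anchoredDist_update_none (w : ∀ t, Option (X t)) (t : Fin k) :
    anchoredDist μ α (Function.update w t none) = α * margMinus (anchoredDist μ α) t w := by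
  simp only [margMinus, anchoredDist_update, mul_sum]
  rw [sum_comm]
  refine sum_congr rfl fun x _ => ?_
  simp only [← mul_sum, ← sum_mul]
  rw [sum_anchorWeight]
  simp only [anchorWeight]
  ring

lemma anchoredDist_mul_condProb_none (hμ : ∀ x, 0 ≤ μ x) (hα0 : 0 ≤ α) (hα1 : α ≤ 1)
    (w : ∀ t, Option (X t)) (t : Fin k) :
    anchoredDist μ α w * condProb (anchoredDist μ α) t w none = α * anchoredDist μ α w := by
  have hν := anchoredDist_nonneg hμ hα0 hα1
  by_cases hpos : 0 < margMinus (anchoredDist μ α) t w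
  · rw [condProb, if_pos hpos, anchoredDist_update_none, mul_div_assoc,
      div_self hpos.ne', mul_one, mul_comm]
  · rw [apply_eq_zero_of_not_margMinus_pos hν hpos, zero_mul, mul_zero]

lemma connRho_anchoredDist_update_none (hμ : ∀ x, 0 ≤ μ x) (hα0 : 0 ≤ α) (hα1 : α ≤ 1)
    {w : ∀ t, Option (X t)} {t : Fin k} (hw : w t ≠ none) :
    connRho (anchoredDist μ α) w (Function.update w t none) =
      (k : ℝ)⁻¹ * (α * anchoredDist μ α w) := by
  rw [connRho_update_of_ne (anchoredDist_nonneg hμ hα0 hα1) hw.symm,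
    anchoredDist_mul_condProb_none hμ hα0 hα1]

lemma mul_sum_anchoredDist_mul_update_none_le (hμ : ∀ x, 0 ≤ μ x) (hα0 : 0 ≤ α) (hα1 : α ≤ 1)
    {G : (∀ t, Option (X t)) → ℝ} (hG : ∀ w, 0 ≤ G w) (t : Fin k) :
    α * ∑ w, anchoredDist μ α w * G (Function.update w t none) ≤
      ∑ w, anchoredDist μ α w * G w := by
  have hν := anchoredDist_nonneg hμ hα0 hα1
  rw [sum_mul_comp_update, mul_sum]
  refine sum_le_sum fun w _ => ?_
  split_ifs with hwt
  · have hmarg := anchoredDist_update_none (μ := μ) (α := α) w t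
    rw [← hwt, Function.update_eq_self] at hmarg
    rw [← mul_assoc, hmarg]
    rfl
  · rw [mul_zero]
    exact mul_nonneg (hν w) (hG w)

end AnchoredDist

def anchorBelow {k : ℕ} {X : Fin k → Type*} (j : ℕ) (w : ∀ t, Option (X t)) :
    ∀ t, Option (X t) :=
  fun s => if (s : ℕ) < j then none else w s

section AnchorBelow

variable {k : ℕ} {X : Fin k → Type*} {α : ℝ}

@[simp]
lemma anchorBelow_zero (w : ∀ t, Option (X t)) : anchorBelow 0 w = w := by
  funext s
  simp [anchorBelow]

lemma anchorBelow_of_le {j : ℕ} (hj : k ≤ j) (w : ∀ t, Option (X t)) :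
    anchorBelow j w = fun _ => none := by
  funext s
  simp [anchorBelow, s.isLt.trans_le hj]

lemma anchorBelow_succ [∀ t, DecidableEq (X t)] (i : Fin k) (w : ∀ t, Option (X t)) :
    anchorBelow (i + 1) w = Function.update (anchorBelow i w) i none := by
  funext s
  rcases eq_or_ne s i with rfl | hs
  · simp [anchorBelow]
  · have : (s : ℕ) ≠ i := Fin.val_ne_of_ne hs
    simp only [anchorBelow, Function.update_of_ne hs]
    split_ifs <;> first | rfl | omega

lemma anchorBelow_succ' [∀ t, DecidableEq (X t)] (i : Fin k) (w : ∀ t, Option (X t)) :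
    anchorBelow (i + 1) w = anchorBelow i (Function.update w i none) := by
  funext s
  rcases eq_or_ne s i with rfl | hs
  · simp [anchorBelow]
  · have : (s : ℕ) ≠ i := Fin.val_ne_of_ne hs
    simp only [anchorBelow, Function.update_of_ne hs]
    split_ifs <;> first | rfl | omega

lemma norm_sub_anchor_sq_le {E : Type*} [SeminormedAddCommGroup E] (hα0 : 0 < α)
    (g : (∀ t, Option (X t)) → E) (w : ∀ t, Option (X t)) :
    ‖g w - g (fun _ => none)‖ ^ 2 ≤ (∑ i : Fin k, (α ^ ((i : ℕ) + 1))⁻¹) *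
      ∑ i : Fin k, α ^ ((i : ℕ) + 1) * ‖g (anchorBelow i w) - g (anchorBelow (i + 1) w)‖ ^ 2 := by
  have htelescope : g w - g (fun _ => none) =
      ∑ i : Fin k, (g (anchorBelow i w) - g (anchorBelow (i + 1) w)) := by
    rw [Fin.sum_univ_eq_sum_range (fun i => g (anchorBelow i w) - g (anchorBelow (i + 1) w)),
      sum_range_sub', anchorBelow_zero, anchorBelow_of_le le_rfl]
  rw [htelescope]
  refine (norm_sum_sq_le_sum_mul_sum_sq_div _ _ (c := fun i : Fin k => (α ^ ((i : ℕ) + 1))⁻¹)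
    fun i _ => inv_pos.2 (pow_pos hα0 _)).trans_eq ?_
  simp only [div_inv_eq_mul, mul_comm]

end AnchorBelow

section Comparison

variable {k : ℕ} {X : Fin k → Type*} [∀ t, Fintype (X t)] [∀ t, DecidableEq (X t)]
  {μ : (∀ t, X t) → ℝ} {α : ℝ}

lemma pow_mul_sum_anchoredDist_mul_anchorBelow_le (hμ : ∀ x, 0 ≤ μ x) (hα0 : 0 ≤ α)
    (hα1 : α ≤ 1) {F : (∀ t, Option (X t)) → ℝ} (hF : ∀ w, 0 ≤ F w) {j : ℕ} (hj : j ≤ k) :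
    α ^ j * ∑ w, anchoredDist μ α w * F (anchorBelow j w) ≤ ∑ w, anchoredDist μ α w * F w := by
  induction j with
  | zero => simp
  | succ j ih =>
    let i : Fin k := ⟨j, hj⟩
    calc α ^ (j + 1) * ∑ w, anchoredDist μ α w * F (anchorBelow (j + 1) w)
        = α ^ j * (α * ∑ w, anchoredDist μ α w *
            F (anchorBelow j (Function.update w i none))) := by
          simp only [← anchorBelow_succ' i, i]
          ring
      _ ≤ α ^ j * ∑ w, anchoredDist μ α w * F (anchorBelow j w) := by
          gcongr
          exact mul_sum_anchoredDist_mul_update_none_le hμ hα0 hα1 (fun w => hF _) i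
      _ ≤ ∑ w, anchoredDist μ α w * F w := ih (by omega)

lemma pow_mul_sum_anchoredDist_mul_norm_sub_sq_le {E : Type*} [SeminormedAddCommGroup E]
    (hμ : ∀ x, 0 ≤ μ x) (hα0 : 0 ≤ α) (hα1 : α ≤ 1) (g : (∀ t, Option (X t)) → E) (i : Fin k) :
    α ^ ((i : ℕ) + 1) * ∑ w, anchoredDist μ α w *
        ‖g (anchorBelow i w) - g (anchorBelow (i + 1) w)‖ ^ 2 ≤
      k * ∑ u, connRho (anchoredDist μ α) u (Function.update u i none) *
        ‖g u - g (Function.update u i none)‖ ^ 2 := by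
  set F : (∀ t, Option (X t)) → ℝ := fun u => ‖g u - g (Function.update u i none)‖ ^ 2
  have hk : (k : ℝ) ≠ 0 := Nat.cast_ne_zero.2 (Fin.pos i).ne'
  calc α ^ ((i : ℕ) + 1) * ∑ w, anchoredDist μ α w *
        ‖g (anchorBelow i w) - g (anchorBelow (i + 1) w)‖ ^ 2
      = α * (α ^ (i : ℕ) * ∑ w, anchoredDist μ α w * F (anchorBelow i w)) := by
        simp only [anchorBelow_succ, F]
        ring
    _ ≤ α * ∑ u, anchoredDist μ α u * F u := by
        gcongr
        exact pow_mul_sum_anchoredDist_mul_anchorBelow_le hμ hα0 hα1 (F := F)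
          (fun _ => sq_nonneg _) i.isLt.le
    _ = k * ∑ u, connRho (anchoredDist μ α) u (Function.update u i none) * F u := by
        simp only [mul_sum]
        refine sum_congr rfl fun u _ => ?_
        by_cases hu : u i = none
        · simp [F, ← hu]
        · rw [connRho_anchoredDist_update_none hμ hα0 hα1 hu]
          field_simp

end Comparison

section Poincare

variable {k : ℕ} {X : Fin k → Type*} [∀ t, Fintype (X t)] [∀ t, DecidableEq (X t)]
  {μ : (∀ t, X t) → ℝ} {α : ℝ}

lemma sum_pow_mul_sum_anchoredDist_le_dirichletEnergy (hμ : ∀ x, 0 ≤ μ x) (hα0 : 0 ≤ α)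
    (hα1 : α ≤ 1) {r : ℕ} (g : (∀ t, Option (X t)) → EuclideanSpace ℝ (Fin r)) :
    ∑ i : Fin k, α ^ ((i : ℕ) + 1) * ∑ w, anchoredDist μ α w *
        ‖g (anchorBelow i w) - g (anchorBelow (i + 1) w)‖ ^ 2 ≤
      k * dirichletEnergy (connRho (anchoredDist μ α)) g :=
  calc _ ≤ ∑ i : Fin k, k * ∑ u, connRho (anchoredDist μ α) u (Function.update u i none) *
          ‖g u - g (Function.update u i none)‖ ^ 2 :=
        sum_le_sum fun i _ => pow_mul_sum_anchoredDist_mul_norm_sub_sq_le hμ hα0 hα1 g i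
    _ ≤ k * dirichletEnergy (connRho (anchoredDist μ α)) g := by
        rw [← mul_sum]
        gcongr
        exact sum_sum_update_le_dirichletEnergy
          (connRho_nonneg (anchoredDist_nonneg hμ hα0 hα1)) (fun _ => none) g

lemma pow_div_mul_varianceH_le_dirichletEnergy (hk : 0 < k) (hμ0 : ∀ x, 0 ≤ μ x)
    (hμ1 : ∑ x, μ x = 1) (hα0 : 0 < α) (hα : α ≤ 1 / 2) {r : ℕ}
    (g : (∀ t, Option (X t)) → EuclideanSpace ℝ (Fin r)) :
    α ^ k / (2 * k) * varianceH (connRho (anchoredDist μ α)) g ≤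
      dirichletEnergy (connRho (anchoredDist μ α)) g := by
  have hα1 : α ≤ 1 := by linarith
  set ν := anchoredDist μ α
  have hν := anchoredDist_nonneg hμ0 hα0.le hα1
  set Δ := fun (i : Fin k) w => ‖g (anchorBelow i w) - g (anchorBelow (i + 1) w)‖ ^ 2
  set C := ∑ i : Fin k, (α ^ ((i : ℕ) + 1))⁻¹
  have hC : C ≤ 2 / α ^ k := by
    simpa only [C, Fin.sum_univ_eq_sum_range (fun i => (α ^ (i + 1))⁻¹)]
      using sum_range_inv_pow_succ_le hα0 hα k
  have hvar : varianceH (connRho ν) g ≤ 2 / α ^ k * (k * dirichletEnergy (connRho ν) g) :=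
    calc varianceH (connRho ν) g
        ≤ ∑ w, ν w * ‖g w - g (fun _ => none)‖ ^ 2 := by
          simp only [varianceH, gbar, ν, vertexWeight_connRho hk hν]
          exact sum_mul_norm_sub_sum_smul_sq_le (sum_anchoredDist hμ1) g _
      _ ≤ ∑ w, ν w * (C * ∑ i : Fin k, α ^ ((i : ℕ) + 1) * Δ i w) := by
          gcongr with w
          · exact hν w
          · exact norm_sub_anchor_sq_le hα0 g w
      _ = C * ∑ i : Fin k, α ^ ((i : ℕ) + 1) * ∑ w, ν w * Δ i w := by
          simp only [mul_sum]
          rw [sum_comm]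
          exact sum_congr rfl fun i _ => sum_congr rfl fun w _ => by ring
      _ ≤ 2 / α ^ k * (k * dirichletEnergy (connRho ν) g) := by
          gcongr
          · exact sum_nonneg fun i _ => mul_nonneg (pow_nonneg hα0.le _)
              (sum_nonneg fun w _ => mul_nonneg (hν w) (sq_nonneg _))
          · exact sum_pow_mul_sum_anchoredDist_le_dirichletEnergy hμ0 hα0.le hα1 g
  have hk' : (k : ℝ) ≠ 0 := Nat.cast_ne_zero.2 hk.ne'
  calc α ^ k / (2 * k) * varianceH (connRho ν) g
      ≤ α ^ k / (2 * k) * (2 / α ^ k * (k * dirichletEnergy (connRho ν) g)) := by gcongr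
    _ = dirichletEnergy (connRho ν) g := by field_simp

end Poincare

/-- Eigenvalue bound for anchored games: for `0 < α < 1/2`, the second-smallest normalized
Laplacian eigenvalue of the `(k-1)`-connection graph of the `α`-anchored game satisfies
`λ(H) ≥ α^k/(8k)`. -/
theorem anchored_eigenvalue_bound {k : ℕ} {X : Fin k → Type*} [∀ t, Fintype (X t)]
    [∀ t, DecidableEq (X t)] (hk : 0 < k)
    (μ : (∀ t, X t) → ℝ) (hμ0 : ∀ x, 0 ≤ μ x) (hμ1 : ∑ x, μ x = 1)
    (α : ℝ) (hα0 : 0 < α) (hα : α < 1 / 2) :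
    α ^ k / (8 * k) ≤ lamH (connRho (anchoredDist μ α)) := by
  have hν := anchoredDist_nonneg hμ0 hα0.le (by linarith)
  have hweight : ∀ u, 0 ≤ vertexWeight (connRho (anchoredDist μ α)) u := fun u =>
    vertexWeight_connRho hk hν u ▸ hν u
  have hnone : anchoredDist μ α (fun _ => none) < ∑ w, anchoredDist μ α w := by
    rw [anchoredDist_none hμ1, sum_anchoredDist hμ1]
    exact pow_lt_one₀ hα0.le (by linarith) hk.ne'
  obtain ⟨w, hw, hwpos⟩ := exists_ne_pos_of_apply_lt_sum hnone
  have hvariance := exists_varianceH_ne_zero hweight hw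
    (by rwa [vertexWeight_connRho hk hν])
    (by rw [vertexWeight_connRho hk hν, anchoredDist_none hμ1]; positivity)
  calc α ^ k / (8 * k) ≤ α ^ k / (2 * k) := by gcongr; norm_num
    _ ≤ lamH (connRho (anchoredDist μ α)) := le_lamH hweight hvariance fun r g =>
        pow_div_mul_varianceH_le_dirichletEnergy hk hμ0 hμ1 hα0 hα.le g
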